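/- Define G̃(θ₁,…,θ_{p-1}) = (G̃_1,…,G̃_p) = (C, ∂C/∂θ_1, …, ∂C/∂θ_{p-1}) evaluated at (θ_1,…,θ_{p-1},0). Then on the set where θ_1,…,θ_{p-1} are nonzero and pairwise distinct, for i, j ∈ {1,…,p−1}: ∂G̃_1/∂θ_i = G̃_{i+1}; for i ≠ j, ∂G̃_{j+1}/∂θ_i = (G̃_{i+1} − G̃_{j+1})/(2(θ_i − θ_j)); and ∂G̃_{i+1}/∂θ_i = G̃_{i+1} − ∑_{k ≠ i, k ≤ p−1} (G̃_{i+1} − G̃_{k+1})/(2(θ_i − θ_k)) − (G̃_{i+1} − (G̃_1 − ∑_{ℓ=1}^{p-1} G̃_{ℓ+1}))/(2θ_i). -/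

import Mathlib

/-!
Differentiating under the integral sign (legitimate because the sphere is compact and has finite
`(p-1)`-dimensional Hausdorff measure), the derivatives of `C` are the moments
`∂_k C = ∫ x_k² e^{θ·x²}` and `∂_k ∂_l C = ∫ x_k² x_l² e^{θ·x²}`. Two identities tie the fourth
moments to the second ones. Since `∑_l x_l² = 1` on the sphere, `∑_l ∂_k ∂_l C = ∂_k C` and
`∑_l ∂_l C = C`. Since the Hausdorff measure is invariant under the rotations `R_t` of the
`(a, b)`-coordinate plane, `t ↦ ∫ (R_t x)_a (R_t x)_b e^{θ·(R_t x)²}` is constant, and its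
derivative at `t = 0` gives `∂_a C - ∂_b C = 2 (θ_a - θ_b) ∂_a ∂_b C`. Solving for the second
derivatives at `θ_p = 0` gives the Pfaffian system.
-/

open MeasureTheory

/-- The normalising constant of the Bingham distribution. -/
noncomputable def binghamC (p : ℕ) (θ : Fin p → ℝ) : ℝ :=
  ∫ x in {x : EuclideanSpace ℝ (Fin p) | ‖x‖ = 1},
    Real.exp (∑ i, θ i * x i ^ 2) ∂ μH[(p : ℝ) - 1]

open Metric Module Real
open scoped InnerProductSpace

section SphereFinite

variable {E : Type*} [NormedAddCommGroup E] [InnerProductSpace ℝ E] [MeasurableSpace E]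
  [BorelSpace E] {n : ℕ} [Fact (finrank ℝ E = n + 1)]

/-- The hemisphere is the image of a compact subset of `(ℝ ∙ v)ᗮ` under the smooth, hence
locally Lipschitz, inverse stereographic projection from `v`. -/
theorem hausdorffMeasure_hemisphere_lt_top {v : E} (hv : ‖v‖ = 1) :
    μH[(n : ℝ)] (sphere (0 : E) 1 ∩ {x | ⟪v, x⟫_ℝ ≤ 0}) < ⊤ := by
  have : FiniteDimensional ℝ E := .of_fact_finrank_eq_succ n
  set A := sphere (0 : E) 1 ∩ {x | ⟪v, x⟫_ℝ ≤ 0}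
  have hA : IsCompact A :=
    (isCompact_sphere 0 1).inter_right (isClosed_le (by fun_prop) continuous_const)
  set T : Set (ℝ ∙ v)ᗮ := stereoToFun v '' A
  have hT : IsCompact T := hA.image_of_continuousOn <| continuousOn_stereoToFun.mono
    fun x hx => by
      have hx' : ⟪v, x⟫_ℝ ≤ 0 := hx.2
      exact (hx'.trans_lt zero_lt_one).ne
  have hcover : A ⊆ (stereoInvFunAux v ∘ (↑)) '' T := by
    rintro x ⟨hxS, hxv⟩
    refine ⟨stereoToFun v x, ⟨x, ⟨hxS, hxv⟩, rfl⟩, ?_⟩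
    have hxv' : x ≠ v := by
      rintro rfl
      norm_num [hv] at hxv
    exact congrArg Subtype.val (stereo_left_inv hv (x := ⟨x, hxS⟩) hxv')
  have hsmooth : ContDiff ℝ 1 (stereoInvFunAux v ∘ (↑) : (ℝ ∙ v)ᗮ → E) :=
    contDiff_stereoInvFunAux.comp (ℝ ∙ v)ᗮ.subtypeL.contDiff
  obtain ⟨K, hK⟩ :=
    hsmooth.locallyLipschitz.locallyLipschitzOn.exists_lipschitzOnWith_of_compact hT
  have hdim : finrank ℝ (ℝ ∙ v)ᗮ = n :=
    Submodule.finrank_orthogonal_span_singleton (by rintro rfl; simp at hv)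
  calc μH[(n : ℝ)] A ≤ μH[(n : ℝ)] ((stereoInvFunAux v ∘ (↑)) '' T) := measure_mono hcover
    _ ≤ (K : ENNReal) ^ (n : ℝ) * μH[(n : ℝ)] T := hK.hausdorffMeasure_image_le (Nat.cast_nonneg n)
    _ < ⊤ := ENNReal.mul_lt_top (by simp) (by rw [← hdim]; exact hT.measure_lt_top)

theorem hausdorffMeasure_sphere_lt_top : μH[(n : ℝ)] (sphere (0 : E) 1) < ⊤ := by
  have : Nontrivial E := Module.nontrivial_of_finrank_eq_succ (R := ℝ) (n := n) Fact.out
  obtain ⟨v, hv⟩ := exists_norm_eq E zero_le_one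
  have hcover : sphere (0 : E) 1 ⊆ (sphere 0 1 ∩ {x | ⟪v, x⟫_ℝ ≤ 0}) ∪
      (sphere 0 1 ∩ {x | ⟪-v, x⟫_ℝ ≤ 0}) := fun x hx => by
    rcases le_total ⟪v, x⟫_ℝ 0 with h | h
    · exact .inl ⟨hx, h⟩
    · exact .inr ⟨hx, by simpa [inner_neg_left] using h⟩
  calc _ ≤ _ := measure_mono hcover
    _ ≤ _ := measure_union_le _ _
    _ < ⊤ := ENNReal.add_lt_top.2 ⟨hausdorffMeasure_hemisphere_lt_top hv,
      hausdorffMeasure_hemisphere_lt_top (by rwa [norm_neg])⟩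

end SphereFinite

section ParametricIntegral

variable {X P F : Type*} [TopologicalSpace X] [MeasurableSpace X] [OpensMeasurableSpace X]
  [SecondCountableTopology X] {μ : Measure X} [IsFiniteMeasure μ] {K : Set X}
  [NormedAddCommGroup F]

theorem Continuous.integrable_of_ae_mem_isCompact (hK : IsCompact K) (hμK : ∀ᵐ x ∂μ, x ∈ K)
    {f : X → F} (hf : Continuous f) : Integrable f μ := by
  obtain ⟨C, hC⟩ := hK.exists_bound_of_continuousOn hf.continuousOn
  refine Integrable.mono' (integrable_const C) hf.aestronglyMeasurable ?_
  filter_upwards [hμK] with x hx using hC x hx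

variable [NormedSpace ℝ F]

theorem hasFDerivAt_integral_of_ae_mem_isCompact [NormedAddCommGroup P] [NormedSpace ℝ P]
    [ProperSpace P] (hK : IsCompact K) (hμK : ∀ᵐ x ∂μ, x ∈ K) {f : P → X → F}
    {f' : P → X → P →L[ℝ] F} (hf : Continuous (Function.uncurry f))
    (hf' : Continuous (Function.uncurry f')) (hff' : ∀ p x, HasFDerivAt (f · x) (f' p x) p)
    (p₀ : P) : HasFDerivAt (fun p => ∫ x, f p x ∂μ) (∫ x, f' p₀ x ∂μ) p₀ := by
  obtain ⟨C, hC⟩ :=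
    ((isCompact_closedBall p₀ 1).prod hK).exists_bound_of_continuousOn hf'.continuousOn
  refine hasFDerivAt_integral_of_dominated_of_fderiv_le (ball_mem_nhds p₀ one_pos)
    (.of_forall fun p => (hf.uncurry_left p).aestronglyMeasurable)
    ((hf.uncurry_left p₀).integrable_of_ae_mem_isCompact hK hμK)
    (hf'.uncurry_left p₀).aestronglyMeasurable ?_ (integrable_const C)
    (.of_forall fun x p _ => hff' p x)
  filter_upwards [hμK] with x hx p hp using hC (p, x) ⟨ball_subset_closedBall hp, hx⟩

theorem hasDerivAt_integral_of_ae_mem_isCompact (hK : IsCompact K) (hμK : ∀ᵐ x ∂μ, x ∈ K)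
    {f f' : ℝ → X → F} (hf : Continuous (Function.uncurry f))
    (hf' : Continuous (Function.uncurry f')) (hff' : ∀ t x, HasDerivAt (f · x) (f' t x) t)
    (t₀ : ℝ) : HasDerivAt (fun t => ∫ x, f t x ∂μ) (∫ x, f' t₀ x ∂μ) t₀ := by
  obtain ⟨C, hC⟩ :=
    ((isCompact_closedBall t₀ 1).prod hK).exists_bound_of_continuousOn hf'.continuousOn
  refine (hasDerivAt_integral_of_dominated_loc_of_deriv_le (ball_mem_nhds t₀ one_pos)
    (.of_forall fun t => (hf.uncurry_left t).aestronglyMeasurable)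
    ((hf.uncurry_left t₀).integrable_of_ae_mem_isCompact hK hμK)
    (hf'.uncurry_left t₀).aestronglyMeasurable ?_ (integrable_const C)
    (.of_forall fun x t _ => hff' t x)).2
  filter_upwards [hμK] with x hx t ht using hC (t, x) ⟨ball_subset_closedBall ht, hx⟩

end ParametricIntegral

section PlaneRotation

variable {N : ℕ}

theorem Fintype.sum_eq_sum_add_of_eq_off_pair {ι α M : Type*} [Fintype ι] [AddCommGroup M]
    {a b : ι} (hab : a ≠ b) {x y : ι → α} (hxy : ∀ k, k ≠ a → k ≠ b → y k = x k)
    (g : ι → α → M) :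
    ∑ k, g k (y k) = ∑ k, g k (x k) + (g a (y a) - g a (x a)) + (g b (y b) - g b (x b)) := by
  have h := Fintype.sum_eq_add a b hab (f := fun k => g k (y k) - g k (x k))
    fun k hk => by simp [hxy k hk.1 hk.2]
  rw [Finset.sum_sub_distrib] at h
  rw [add_assoc, ← h, add_sub_cancel]

noncomputable def planeRotation (a b : Fin N) (t : ℝ) :
    EuclideanSpace ℝ (Fin N) →ₗ[ℝ] EuclideanSpace ℝ (Fin N) where
  toFun x := WithLp.toLp 2 fun k =>
    if k = a then cos t * x a - sin t * x b
    else if k = b then sin t * x a + cos t * x b else x k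
  map_add' x y := by ext k; simp only [PiLp.add_apply]; split_ifs <;> ring
  map_smul' c x := by
    ext k; simp only [PiLp.smul_apply, smul_eq_mul, RingHom.id_apply]; split_ifs <;> ring

variable {a b : Fin N}

theorem planeRotation_apply_left (t : ℝ) (x : EuclideanSpace ℝ (Fin N)) :
    planeRotation a b t x a = cos t * x a - sin t * x b := by
  simp [planeRotation]

theorem planeRotation_apply_right (hab : a ≠ b) (t : ℝ) (x : EuclideanSpace ℝ (Fin N)) :
    planeRotation a b t x b = sin t * x a + cos t * x b := by
  simp [planeRotation, hab.symm]

theorem planeRotation_apply_of_ne (t : ℝ) (x : EuclideanSpace ℝ (Fin N)) {k : Fin N}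
    (hka : k ≠ a) (hkb : k ≠ b) : planeRotation a b t x k = x k := by
  simp [planeRotation, hka, hkb]

theorem norm_planeRotation (hab : a ≠ b) (t : ℝ) (x : EuclideanSpace ℝ (Fin N)) :
    ‖planeRotation a b t x‖ = ‖x‖ := by
  rw [← sq_eq_sq₀ (norm_nonneg _) (norm_nonneg _), EuclideanSpace.real_norm_sq_eq,
    EuclideanSpace.real_norm_sq_eq, Fintype.sum_eq_sum_add_of_eq_off_pair hab
      (fun k => planeRotation_apply_of_ne t x) fun _ r => r ^ 2,
    planeRotation_apply_left, planeRotation_apply_right hab]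
  linear_combination (x a ^ 2 + x b ^ 2) * sin_sq_add_cos_sq t

noncomputable def planeRotationₗᵢ (hab : a ≠ b) (t : ℝ) :
    EuclideanSpace ℝ (Fin N) ≃ₗᵢ[ℝ] EuclideanSpace ℝ (Fin N) :=
  LinearIsometry.toLinearIsometryEquiv ⟨planeRotation a b t, norm_planeRotation hab t⟩ rfl

end PlaneRotation

section SphereMeasure

variable {N : ℕ}

noncomputable def sphereMeasure (N : ℕ) : Measure (EuclideanSpace ℝ (Fin N)) :=
  μH[(N : ℝ) - 1].restrict (sphere 0 1)

instance : IsFiniteMeasure (sphereMeasure N) := by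
  refine ⟨?_⟩
  rw [sphereMeasure, Measure.restrict_apply_univ]
  cases N with
  | zero => simp [sphere_eq_empty_of_subsingleton]
  | succ n =>
    have : Fact (finrank ℝ (EuclideanSpace ℝ (Fin (n + 1))) = n + 1) := ⟨finrank_euclideanSpace_fin⟩
    simpa using hausdorffMeasure_sphere_lt_top (E := EuclideanSpace ℝ (Fin (n + 1)))

theorem ae_mem_sphere_sphereMeasure :
    ∀ᵐ x ∂sphereMeasure N, x ∈ sphere (0 : EuclideanSpace ℝ (Fin N)) 1 :=
  ae_restrict_mem isClosed_sphere.measurableSet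

theorem Continuous.integrable_sphereMeasure {F : Type*} [NormedAddCommGroup F]
    {f : EuclideanSpace ℝ (Fin N) → F} (hf : Continuous f) : Integrable f (sphereMeasure N) :=
  hf.integrable_of_ae_mem_isCompact (isCompact_sphere 0 1) ae_mem_sphere_sphereMeasure

theorem integral_sphereMeasure_comp_linearIsometryEquiv {G : Type*} [NormedAddCommGroup G]
    [NormedSpace ℝ G] (e : EuclideanSpace ℝ (Fin N) ≃ₗᵢ[ℝ] EuclideanSpace ℝ (Fin N))
    (f : EuclideanSpace ℝ (Fin N) → G) :
    ∫ x, f (e x) ∂sphereMeasure N = ∫ x, f x ∂sphereMeasure N := by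
  have h := (e.toIsometryEquiv.measurePreserving_hausdorffMeasure ((N : ℝ) - 1)).restrict_preimage
    (isClosed_sphere (x := (0 : EuclideanSpace ℝ (Fin N))) (ε := 1)).measurableSet
  rw [LinearIsometryEquiv.coe_toIsometryEquiv, e.preimage_sphere, map_zero] at h
  exact h.integral_comp e.toHomeomorph.measurableEmbedding f

end SphereMeasure

section Moments

variable {N : ℕ}

noncomputable def binghamMoment (N : ℕ) (g : EuclideanSpace ℝ (Fin N) → ℝ) (θ : Fin N → ℝ) : ℝ :=
  ∫ x, g x * exp (∑ k, θ k * x k ^ 2) ∂sphereMeasure N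

theorem binghamC_eq_binghamMoment (θ : Fin N → ℝ) : binghamC N θ = binghamMoment N 1 θ := by
  have hS : {x : EuclideanSpace ℝ (Fin N) | ‖x‖ = 1} = sphere 0 1 := by ext; simp
  simp only [binghamC, binghamMoment, sphereMeasure, hS, Pi.one_apply, one_mul]

noncomputable def sqCoordFunctional (x : EuclideanSpace ℝ (Fin N)) : (Fin N → ℝ) →L[ℝ] ℝ :=
  ∑ k, x k ^ 2 • ContinuousLinearMap.proj k

theorem sqCoordFunctional_apply (x : EuclideanSpace ℝ (Fin N)) (θ : Fin N → ℝ) :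
    sqCoordFunctional x θ = ∑ k, θ k * x k ^ 2 := by
  simp [sqCoordFunctional, mul_comm]

theorem continuous_sqCoordFunctional :
    Continuous fun x : EuclideanSpace ℝ (Fin N) => sqCoordFunctional x := by
  unfold sqCoordFunctional; fun_prop

theorem hasFDerivAt_binghamMoment {g : EuclideanSpace ℝ (Fin N) → ℝ} (hg : Continuous g)
    (θ : Fin N → ℝ) :
    HasFDerivAt (binghamMoment N g)
      (∫ x, (g x * exp (∑ k, θ k * x k ^ 2)) • sqCoordFunctional x ∂sphereMeasure N) θ := by
  refine hasFDerivAt_integral_of_ae_mem_isCompact (isCompact_sphere 0 1)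
    ae_mem_sphere_sphereMeasure (f := fun θ x => g x * exp (∑ k, θ k * x k ^ 2))
    (f' := fun θ x => (g x * exp (∑ k, θ k * x k ^ 2)) • sqCoordFunctional x)
    (by fun_prop) ?_ (fun θ x => ?_) θ
  · have := continuous_sqCoordFunctional (N := N)
    fun_prop
  · have h : HasFDerivAt (fun θ : Fin N → ℝ => ∑ k, θ k * x k ^ 2) (sqCoordFunctional x) θ := by
      rw [← funext (sqCoordFunctional_apply x)]
      exact (sqCoordFunctional x).hasFDerivAt
    simpa only [smul_smul] using h.exp.const_mul (g x)

theorem fderiv_binghamMoment_single {g : EuclideanSpace ℝ (Fin N) → ℝ} (hg : Continuous g)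
    (θ : Fin N → ℝ) (k : Fin N) :
    fderiv ℝ (binghamMoment N g) θ (Pi.single k 1)
      = binghamMoment N (fun x => g x * x k ^ 2) θ := by
  have hint : Continuous fun x : EuclideanSpace ℝ (Fin N) =>
      (g x * exp (∑ k, θ k * x k ^ 2)) • sqCoordFunctional x := by
    have := continuous_sqCoordFunctional (N := N); fun_prop
  rw [(hasFDerivAt_binghamMoment hg θ).fderiv,
    ContinuousLinearMap.integral_apply hint.integrable_sphereMeasure, binghamMoment]
  refine integral_congr_ae (.of_forall fun x => ?_)
  simp [sqCoordFunctional_apply, Pi.single_apply]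
  ring

theorem sum_binghamMoment_mul_sq {g : EuclideanSpace ℝ (Fin N) → ℝ} (hg : Continuous g)
    (θ : Fin N → ℝ) :
    ∑ k, binghamMoment N (fun x => g x * x k ^ 2) θ = binghamMoment N g θ := by
  simp only [binghamMoment]
  rw [← integral_finsetSum _ fun k _ => (by fun_prop : Continuous _).integrable_sphereMeasure]
  refine integral_congr_ae ?_
  filter_upwards [ae_mem_sphere_sphereMeasure] with x hx
  have hx1 : ∑ k, x k ^ 2 = 1 := by
    rw [← EuclideanSpace.real_norm_sq_eq, mem_sphere_zero_iff_norm.1 hx, one_pow]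
  rw [← Finset.sum_mul, ← Finset.mul_sum, hx1, mul_one]

theorem hasDerivAt_rotation_integrand (θa θb w xa xb t : ℝ) :
    HasDerivAt (fun s => (cos s * xa - sin s * xb) * (sin s * xa + cos s * xb)
        * exp (θa * (cos s * xa - sin s * xb) ^ 2 + θb * (sin s * xa + cos s * xb) ^ 2 + w))
      (((cos t * xa - sin t * xb) ^ 2 - (sin t * xa + cos t * xb) ^ 2
          + 2 * (θb - θa) * ((cos t * xa - sin t * xb) ^ 2 * (sin t * xa + cos t * xb) ^ 2))
        * exp (θa * (cos t * xa - sin t * xb) ^ 2 + θb * (sin t * xa + cos t * xb) ^ 2 + w)) t := by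
  have hP : HasDerivAt (fun s => cos s * xa - sin s * xb) (-(sin t * xa + cos t * xb)) t :=
    (((hasDerivAt_cos t).mul_const xa).sub ((hasDerivAt_sin t).mul_const xb)).congr_deriv
      (by ring)
  have hQ : HasDerivAt (fun s => sin s * xa + cos s * xb) (cos t * xa - sin t * xb) t :=
    (((hasDerivAt_sin t).mul_const xa).add ((hasDerivAt_cos t).mul_const xb)).congr_deriv
      (by ring)
  exact ((hP.mul hQ).mul ((((hP.pow 2).const_mul θa).add
    ((hQ.pow 2).const_mul θb)).add_const w).exp).congr_deriv
    (by simp only [Pi.add_apply, Pi.mul_apply, Pi.pow_apply]; ring)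

variable {a b : Fin N}

theorem integral_rotation_generator_eq_zero (hab : a ≠ b) (θ : Fin N → ℝ) :
    ∫ x, (x a ^ 2 - x b ^ 2 + 2 * (θ b - θ a) * (x a ^ 2 * x b ^ 2))
      * exp (∑ k, θ k * x k ^ 2) ∂sphereMeasure N = 0 := by
  set q : EuclideanSpace ℝ (Fin N) → ℝ := fun x => ∑ k, θ k * x k ^ 2
  set w : EuclideanSpace ℝ (Fin N) → ℝ := fun x => q x - θ a * x a ^ 2 - θ b * x b ^ 2
  let f : ℝ → EuclideanSpace ℝ (Fin N) → ℝ := fun t x =>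
    (cos t * x a - sin t * x b) * (sin t * x a + cos t * x b)
      * exp (θ a * (cos t * x a - sin t * x b) ^ 2 + θ b * (sin t * x a + cos t * x b) ^ 2 + w x)
  let f' : ℝ → EuclideanSpace ℝ (Fin N) → ℝ := fun t x =>
    ((cos t * x a - sin t * x b) ^ 2 - (sin t * x a + cos t * x b) ^ 2
        + 2 * (θ b - θ a) * ((cos t * x a - sin t * x b) ^ 2 * (sin t * x a + cos t * x b) ^ 2))
      * exp (θ a * (cos t * x a - sin t * x b) ^ 2 + θ b * (sin t * x a + cos t * x b) ^ 2 + w x)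
  -- `f t` is `g` composed with the rotation by `t`, written out so that it can be differentiated
  set g : EuclideanSpace ℝ (Fin N) → ℝ := fun y => y a * y b * exp (q y)
  have hf : ∀ t x, f t x = g (planeRotationₗᵢ hab t x) := by
    intro t x
    have hq := Fintype.sum_eq_sum_add_of_eq_off_pair hab
      (fun k => planeRotation_apply_of_ne t x) fun k r => θ k * r ^ 2
    simp only [planeRotationₗᵢ, LinearIsometry.coe_toLinearIsometryEquiv, LinearIsometry.coe_mk,
      g, q, hq, planeRotation_apply_left, planeRotation_apply_right hab, f, w]
    ring_nf
  have hconst : (fun t => ∫ x, f t x ∂sphereMeasure N) = fun _ => ∫ x, f 0 x ∂sphereMeasure N := by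
    funext t
    simp only [hf, integral_sphereMeasure_comp_linearIsometryEquiv _ g]
  have hderiv := hasDerivAt_integral_of_ae_mem_isCompact (isCompact_sphere 0 1)
    ae_mem_sphere_sphereMeasure (f := f) (f' := f') (by fun_prop) (by fun_prop)
    (fun t x => hasDerivAt_rotation_integrand _ _ _ _ _ t) 0
  rw [hconst] at hderiv
  rw [← hderiv.unique (hasDerivAt_const 0 _)]
  refine integral_congr_ae (.of_forall fun x => ?_)
  simp only [f', w, q, cos_zero, sin_zero]
  ring_nf

theorem binghamMoment_sq_sub_sq (hab : a ≠ b) (θ : Fin N → ℝ) :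
    binghamMoment N (fun x => x a ^ 2) θ - binghamMoment N (fun x => x b ^ 2) θ
      = 2 * (θ a - θ b) * binghamMoment N (fun x => x a ^ 2 * x b ^ 2) θ := by
  have h := integral_rotation_generator_eq_zero hab θ
  rw [show ∫ x, (x a ^ 2 - x b ^ 2 + 2 * (θ b - θ a) * (x a ^ 2 * x b ^ 2))
        * exp (∑ k, θ k * x k ^ 2) ∂sphereMeasure N
      = binghamMoment N (fun x => x a ^ 2) θ - binghamMoment N (fun x => x b ^ 2) θ
        + 2 * (θ b - θ a) * binghamMoment N (fun x => x a ^ 2 * x b ^ 2) θ by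
    calc _ = ∫ x, (x a ^ 2 * exp (∑ k, θ k * x k ^ 2) - x b ^ 2 * exp (∑ k, θ k * x k ^ 2))
          + 2 * (θ b - θ a) * (x a ^ 2 * x b ^ 2 * exp (∑ k, θ k * x k ^ 2)) ∂sphereMeasure N :=
          integral_congr_ae (.of_forall fun x => by ring)
      _ = _ := by
        rw [integral_add, integral_sub, integral_const_mul]
        · rfl
        all_goals exact Continuous.integrable_sphereMeasure (by fun_prop)] at h
  linarith

theorem binghamMoment_sq_mul_sq (hab : a ≠ b) {θ : Fin N → ℝ} (hθ : θ a ≠ θ b) :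
    binghamMoment N (fun x => x a ^ 2 * x b ^ 2) θ
      = (binghamMoment N (fun x => x a ^ 2) θ - binghamMoment N (fun x => x b ^ 2) θ)
        / (2 * (θ a - θ b)) := by
  rw [binghamMoment_sq_sub_sq hab, mul_div_cancel_left₀]
  exact mul_ne_zero two_ne_zero (sub_ne_zero.2 hθ)

theorem binghamMoment_sq_mul_sq_self {θ : Fin N → ℝ} (hθ : ∀ k, k ≠ a → θ k ≠ θ a) :
    binghamMoment N (fun x => x a ^ 2 * x a ^ 2) θ
      = binghamMoment N (fun x => x a ^ 2) θ
        - ∑ k ∈ Finset.univ.erase a, (binghamMoment N (fun x => x a ^ 2) θ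
            - binghamMoment N (fun x => x k ^ 2) θ) / (2 * (θ a - θ k)) := by
  have htrace := sum_binghamMoment_mul_sq (g := fun x => x a ^ 2) (by fun_prop) θ
  rw [← Finset.add_sum_erase _ _ (Finset.mem_univ a)] at htrace
  have hoff : ∑ k ∈ Finset.univ.erase a, binghamMoment N (fun x => x a ^ 2 * x k ^ 2) θ
      = ∑ k ∈ Finset.univ.erase a, (binghamMoment N (fun x => x a ^ 2) θ
          - binghamMoment N (fun x => x k ^ 2) θ) / (2 * (θ a - θ k)) :=
    Finset.sum_congr rfl fun k hk =>
      have hka := Finset.ne_of_mem_erase hk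
      binghamMoment_sq_mul_sq hka.symm (hθ k hka).symm
  linarith

end Moments

section FixLastParameter

variable {m : ℕ}

noncomputable def snocZero (m : ℕ) : (Fin m → ℝ) →L[ℝ] (Fin (m + 1) → ℝ) :=
  LinearMap.toContinuousLinearMap
    { toFun := fun ψ => Fin.snoc ψ 0
      map_add' := fun ψ χ => by ext k; refine Fin.lastCases ?_ (fun i => ?_) k <;> simp
      map_smul' := fun c ψ => by ext k; refine Fin.lastCases ?_ (fun i => ?_) k <;> simp }

theorem snocZero_single (i : Fin m) : snocZero m (Pi.single i 1) = Pi.single i.castSucc 1 := by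
  ext k
  refine Fin.lastCases ?_ (fun j => ?_) k <;> simp [snocZero, Pi.single_apply]

theorem fderiv_binghamMoment_snoc_zero_single {g : EuclideanSpace ℝ (Fin (m + 1)) → ℝ}
    (hg : Continuous g) (φ : Fin m → ℝ) (i : Fin m) :
    fderiv ℝ (fun ψ => binghamMoment (m + 1) g (Fin.snoc ψ 0)) φ (Pi.single i 1)
      = binghamMoment (m + 1) (fun x => g x * x i.castSucc ^ 2) (Fin.snoc φ 0) := by
  have hcomp : (fun ψ => binghamMoment (m + 1) g (Fin.snoc ψ 0))
      = binghamMoment (m + 1) g ∘ snocZero m := rfl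
  rw [hcomp, fderiv_comp φ (hasFDerivAt_binghamMoment hg _).differentiableAt
    (snocZero m).differentiableAt, (snocZero m).fderiv, ContinuousLinearMap.comp_apply,
    snocZero_single]
  exact fderiv_binghamMoment_single hg _ _

variable {φ : Fin m → ℝ}

theorem binghamMoment_snoc_zero_sq_mul_sq {i j : Fin m} (hij : i ≠ j) (hφ : φ i ≠ φ j) :
    binghamMoment (m + 1) (fun x => x j.castSucc ^ 2 * x i.castSucc ^ 2) (Fin.snoc φ 0)
      = (binghamMoment (m + 1) (fun x => x i.castSucc ^ 2) (Fin.snoc φ 0)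
          - binghamMoment (m + 1) (fun x => x j.castSucc ^ 2) (Fin.snoc φ 0))
        / (2 * (φ i - φ j)) := by
  rw [show (fun x : EuclideanSpace ℝ (Fin (m + 1)) => x j.castSucc ^ 2 * x i.castSucc ^ 2)
      = fun x => x i.castSucc ^ 2 * x j.castSucc ^ 2 from funext fun x => mul_comm _ _,
    binghamMoment_sq_mul_sq ((Fin.castSucc_injective m).ne hij) (by simpa using hφ)]
  simp

theorem binghamMoment_snoc_zero_sq_mul_sq_self (i : Fin m) (hφ0 : φ i ≠ 0)
    (hφ : ∀ k, k ≠ i → φ k ≠ φ i) :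
    binghamMoment (m + 1) (fun x => x i.castSucc ^ 2 * x i.castSucc ^ 2) (Fin.snoc φ 0)
      = binghamMoment (m + 1) (fun x => x i.castSucc ^ 2) (Fin.snoc φ 0)
        - ∑ k ∈ Finset.univ.erase i,
            (binghamMoment (m + 1) (fun x => x i.castSucc ^ 2) (Fin.snoc φ 0)
              - binghamMoment (m + 1) (fun x => x k.castSucc ^ 2) (Fin.snoc φ 0))
            / (2 * (φ i - φ k))
        - (binghamMoment (m + 1) (fun x => x i.castSucc ^ 2) (Fin.snoc φ 0)
            - (binghamMoment (m + 1) 1 (Fin.snoc φ 0)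
              - ∑ l : Fin m, binghamMoment (m + 1) (fun x => x l.castSucc ^ 2) (Fin.snoc φ 0)))
          / (2 * φ i) := by
  set θ : Fin (m + 1) → ℝ := Fin.snoc φ 0
  have hθ : ∀ k, θ k.castSucc = φ k := fun k => Fin.snoc_castSucc ..
  have hne : ∀ k, k ≠ i.castSucc → θ k ≠ θ i.castSucc := by
    intro k hk
    induction k using Fin.lastCases with
    | last => simpa [θ] using hφ0.symm
    | cast l => rw [hθ, hθ]; exact hφ l fun h => hk (h ▸ rfl)
  -- the last moment is recovered from `C` because `∑ x_k² = 1` on the sphere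
  have htrace := sum_binghamMoment_mul_sq (g := 1) continuous_const θ
  simp only [Fin.sum_univ_castSucc, Pi.one_apply, one_mul] at htrace
  rw [binghamMoment_sq_mul_sq_self hne, Finset.sum_erase_eq_sub (Finset.mem_univ _),
    Fin.sum_univ_castSucc, Finset.sum_erase_eq_sub (Finset.mem_univ i), ← htrace]
  simp only [hθ, θ, Fin.snoc_last]
  ring

end FixLastParameter

/-- Here `p = m + 1`, `φ i = θ_{i+1}`, `Ct = G̃_1` and `Gt i = G̃_{i+2}` (`Fin m` starts at `0`). -/
theorem bingham_pfaffian_tilde_general (m : ℕ) (φ : Fin m → ℝ)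
    (h0 : ∀ i, φ i ≠ 0) (hdist : ∀ i j : Fin m, i ≠ j → φ i ≠ φ j) :
    let Ct : (Fin m → ℝ) → ℝ := fun ψ => binghamC (m + 1) (Fin.snoc ψ 0)
    let Gt : Fin m → (Fin m → ℝ) → ℝ := fun i ψ => fderiv ℝ Ct ψ (Pi.single i 1)
    (∀ i : Fin m, fderiv ℝ Ct φ (Pi.single i 1) = Gt i φ)
    ∧ (∀ i j : Fin m, i ≠ j →
        fderiv ℝ (Gt j) φ (Pi.single i 1) = (Gt i φ - Gt j φ) / (2 * (φ i - φ j)))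
    ∧ (∀ i : Fin m,
        fderiv ℝ (Gt i) φ (Pi.single i 1)
          = Gt i φ - (∑ k ∈ Finset.univ.erase i, (Gt i φ - Gt k φ) / (2 * (φ i - φ k)))
            - (Gt i φ - (Ct φ - ∑ ℓ, Gt ℓ φ)) / (2 * φ i)) := by
  intro Ct Gt
  have hCt : Ct = fun ψ => binghamMoment (m + 1) 1 (Fin.snoc ψ 0) :=
    funext fun ψ => binghamC_eq_binghamMoment _
  have hGt : ∀ j, Gt j
      = fun ψ => binghamMoment (m + 1) (fun x => x j.castSucc ^ 2) (Fin.snoc ψ 0) := by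
    intro j
    funext ψ
    simpa only [Gt, hCt, Pi.one_apply, one_mul] using
      fderiv_binghamMoment_snoc_zero_single (g := 1) continuous_const ψ j
  refine ⟨fun i => rfl, fun i j hij => ?_, fun i => ?_⟩
  · rw [hGt j, fderiv_binghamMoment_snoc_zero_single (by fun_prop),
      binghamMoment_snoc_zero_sq_mul_sq hij (hdist i j hij), hGt]
  · rw [hGt i, fderiv_binghamMoment_snoc_zero_single (by fun_prop),
      binghamMoment_snoc_zero_sq_mul_sq_self i (h0 i) fun k hk => hdist k i hk]
    simp only [hGt, hCt]

/-- Pfaffian system for `G̃ = (C, ∂₁C, …, ∂_{p-1}C)|_{θ_p = 0}` after removing the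
redundancy by fixing the last parameter to `0`.  Here `p = m + 1` with `m ≥ 1`,
the free parameters are `φ = (θ_1,…,θ_{p-1})`, assumed nonzero and pairwise
distinct. -/
theorem bingham_pfaffian_tilde (m : ℕ) (hm : 1 ≤ m) (φ : Fin m → ℝ)
    (h0 : ∀ i, φ i ≠ 0) (hdist : ∀ i j : Fin m, i ≠ j → φ i ≠ φ j) :
    let Ct : (Fin m → ℝ) → ℝ := fun ψ => binghamC (m + 1) (Fin.snoc ψ 0)
    let Gt : Fin m → (Fin m → ℝ) → ℝ := fun i ψ => fderiv ℝ Ct ψ (Pi.single i 1)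
    (∀ i : Fin m, fderiv ℝ Ct φ (Pi.single i 1) = Gt i φ)
    ∧ (∀ i j : Fin m, i ≠ j →
        fderiv ℝ (Gt j) φ (Pi.single i 1) = (Gt i φ - Gt j φ) / (2 * (φ i - φ j)))
    ∧ (∀ i : Fin m,
        fderiv ℝ (Gt i) φ (Pi.single i 1)
          = Gt i φ - (∑ k ∈ Finset.univ.erase i, (Gt i φ - Gt k φ) / (2 * (φ i - φ k)))
            - (Gt i φ - (Ct φ - ∑ ℓ, Gt ℓ φ)) / (2 * φ i)) :=
  bingham_pfaffian_tilde_general m φ h0 hdist
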